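/- Let p, q ≥ 1 and let ξ = i·diag(a·I_p, b·I_q) with a = -q/(p+q) and b = p/(p+q). Then exp(tξ) = diag(e^{ita}·I_p, e^{itb}·I_q) is a real orthogonal matrix (lies in SO(p+q)) if and only if both ta ∈ πℤ and tb ∈ πℤ. Consequently the smallest t > 0 with exp(tξ) ∈ SO(p+q) is nπ where n is the smallest positive integer such that np/(p+q) and nq/(p+q) are both integers. -/

import Mathlib

open Matrix NormedSpace Real

/-- A complex square matrix lies in SO(m) (real orthogonal of determinant 1,
viewed inside the complex matrices) iff all its entries are real, it is
orthogonal, and its determinant is 1. -/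
def IsInSO {ι : Type*} [Fintype ι] [DecidableEq ι] (M : Matrix ι ι ℂ) : Prop :=
  (∀ i j, (M i j).im = 0) ∧ Mᵀ * M = 1 ∧ M.det = 1

lemma smul_one_diag {m : Type*} [Fintype m] [DecidableEq m] (c : ℂ) :
    c • (1 : Matrix m m ℂ) = diagonal (fun _ => c) := by
  ext i j
  simp [Matrix.smul_apply, Matrix.one_apply, Matrix.diagonal_apply]

lemma exp_fromBlocks (p q : ℕ) (c d : ℂ) :
    exp (fromBlocks (c • (1 : Matrix (Fin p) (Fin p) ℂ)) 0 0
      (d • (1 : Matrix (Fin q) (Fin q) ℂ))) =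
    fromBlocks (Complex.exp c • 1) 0 0 (Complex.exp d • 1) := by
  rw [smul_one_diag, smul_one_diag, smul_one_diag, smul_one_diag,
    Matrix.fromBlocks_diagonal, Matrix.fromBlocks_diagonal, Matrix.exp_diagonal]
  have h : (exp ((fun _ : Fin p => c) ⊕ᵥ fun _ : Fin q => d)) =
      ((fun _ : Fin p => Complex.exp c) ⊕ᵥ fun _ : Fin q => Complex.exp d) := by
    funext x
    cases x <;> simp [Pi.exp_def, ← Complex.exp_eq_exp_ℂ]
  rw [h]

lemma sq_exp_iff (θ : ℝ) :
    (Complex.exp (Complex.I * θ))^2 = 1 ↔ ∃ k : ℤ, θ = π * k := by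
  rw [show (Complex.exp (Complex.I * θ))^2 = Complex.exp (Complex.I * (2*θ)) by
      rw [← Complex.exp_nat_mul]; ring_nf, Complex.exp_eq_one_iff]
  constructor
  · rintro ⟨k, hk⟩
    refine ⟨k, ?_⟩
    have h2 : (2*θ : ℂ) = k * (2*π) := by
      have := mul_left_cancel₀ Complex.I_ne_zero
        (by rw [hk]; push_cast; ring : Complex.I * (2*θ : ℂ) = Complex.I * (k * (2*π)))
      exact_mod_cast this
    have : (2*θ : ℝ) = k * (2*π) := by exact_mod_cast h2
    linarith
  · rintro ⟨k, hk⟩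
    exact ⟨k, by rw [hk]; push_cast; ring⟩

/-- For ξ = i·diag(a·I_p, b·I_q), a = -q/(p+q), b = p/(p+q),
exp(tξ) = diag(e^{ita}I_p, e^{itb}I_q) lies in SO(p+q) iff ta, tb ∈ πℤ;
consequently the smallest positive t with exp(tξ) ∈ SO(p+q) is nπ where n
is the smallest positive integer with np/(p+q), nq/(p+q) ∈ ℤ. -/
theorem stmt_1 (p q : ℕ) (hp : 1 ≤ p) (hq : 1 ≤ q) (a b : ℝ)
    (ha : a = -(q : ℝ) / (p + q)) (hb : b = (p : ℝ) / (p + q))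
    (ξ : Matrix (Fin p ⊕ Fin q) (Fin p ⊕ Fin q) ℂ)
    (hξ : ξ = Complex.I • Matrix.fromBlocks ((a : ℂ) • 1) 0 0 ((b : ℂ) • 1)) :
    (∀ t : ℝ,
      exp ((t : ℂ) • ξ) =
        Matrix.fromBlocks (Complex.exp (Complex.I * (t * a)) • 1) 0 0
          (Complex.exp (Complex.I * (t * b)) • 1) ∧
      (IsInSO (exp ((t : ℂ) • ξ)) ↔
        ((∃ k : ℤ, t * a = π * k) ∧ (∃ k : ℤ, t * b = π * k)))) ∧
    (∀ n : ℕ, IsLeast {m : ℕ | 0 < m ∧ (p + q) ∣ m * p ∧ (p + q) ∣ m * q} n →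
      IsLeast {t : ℝ | 0 < t ∧ IsInSO (exp ((t : ℂ) • ξ))} (n * π)) := by
  have hpq0 : ((p:ℝ) + q) ≠ 0 := by positivity
  have hab : a * p + b * q = 0 := by rw [ha, hb]; field_simp; ring
  -- the exponential formula
  have hexp : ∀ t : ℝ, exp ((t : ℂ) • ξ) =
      Matrix.fromBlocks (Complex.exp (Complex.I * (t * a)) • 1) 0 0
        (Complex.exp (Complex.I * (t * b)) • 1) := by
    intro t
    have hblock : (t : ℂ) • ξ =
        fromBlocks ((Complex.I * (t * a) : ℂ) • (1 : Matrix (Fin p) (Fin p) ℂ)) 0 0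
          ((Complex.I * (t * b) : ℂ) • (1 : Matrix (Fin q) (Fin q) ℂ)) := by
      rw [hξ, smul_smul, Matrix.fromBlocks_smul, smul_zero, smul_zero,
        smul_smul, smul_smul]
      have e1 : (t : ℂ) * Complex.I * a = Complex.I * ((t : ℝ) * a) := by
        push_cast; ring
      have e2 : (t : ℂ) * Complex.I * b = Complex.I * ((t : ℝ) * b) := by
        push_cast; ring
      rw [e1, e2]
    rw [hblock, exp_fromBlocks]
  -- the characterization
  have hiff : ∀ t : ℝ, IsInSO (exp ((t : ℂ) • ξ)) ↔
      ((∃ k : ℤ, t * a = π * k) ∧ (∃ k : ℤ, t * b = π * k)) := by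
    intro t
    rw [hexp t]
    set c := Complex.exp (Complex.I * (t * a)) with hc
    set d := Complex.exp (Complex.I * (t * b)) with hd
    have hca : c = Complex.exp (Complex.I * ((t * a : ℝ) : ℂ)) := by rw [hc]; norm_cast
    have hdb : d = Complex.exp (Complex.I * ((t * b : ℝ) : ℂ)) := by rw [hd]; norm_cast
    have hMtM : (fromBlocks (c • (1 : Matrix (Fin p) (Fin p) ℂ)) 0 0
        (d • (1 : Matrix (Fin q) (Fin q) ℂ)))ᵀ *
        fromBlocks (c • 1) 0 0 (d • 1) =
        fromBlocks ((c^2) • 1) 0 0 ((d^2) • 1) := by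
      rw [Matrix.fromBlocks_transpose, Matrix.transpose_smul, Matrix.transpose_smul,
        Matrix.transpose_one, Matrix.transpose_one, Matrix.transpose_zero,
        Matrix.transpose_zero, Matrix.fromBlocks_multiply]
      simp [Matrix.smul_mul, Matrix.mul_smul, smul_smul, sq]
    constructor
    · rintro ⟨-, horth, -⟩
      rw [hMtM] at horth
      have hc2 : c ^ 2 = 1 := by
        have := congrFun (congrFun horth (Sum.inl ⟨0, hp⟩)) (Sum.inl ⟨0, hp⟩)
        simpa [Matrix.one_apply] using this
      have hd2 : d ^ 2 = 1 := by
        have := congrFun (congrFun horth (Sum.inr ⟨0, hq⟩)) (Sum.inr ⟨0, hq⟩)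
        simpa [Matrix.one_apply] using this
      exact ⟨(sq_exp_iff (t * a)).mp (by rw [← hca]; exact hc2),
        (sq_exp_iff (t * b)).mp (by rw [← hdb]; exact hd2)⟩
    · rintro ⟨⟨k, hk⟩, ⟨l, hl⟩⟩
      have hc2 : c ^ 2 = 1 := by
        rw [hca]; exact (sq_exp_iff (t * a)).mpr ⟨k, hk⟩
      have hd2 : d ^ 2 = 1 := by
        rw [hdb]; exact (sq_exp_iff (t * b)).mpr ⟨l, hl⟩
      have hcim : c.im = 0 := by
        rw [hc, show Complex.I * ((t : ℂ) * a) = ((t * a : ℝ) : ℂ) * Complex.I by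
          push_cast; ring, Complex.exp_ofReal_mul_I_im, hk, mul_comm]
        exact Real.sin_int_mul_pi k
      have hdim : d.im = 0 := by
        rw [hd, show Complex.I * ((t : ℂ) * b) = ((t * b : ℝ) : ℂ) * Complex.I by
          push_cast; ring, Complex.exp_ofReal_mul_I_im, hl, mul_comm]
        exact Real.sin_int_mul_pi l
      refine ⟨?_, ?_, ?_⟩
      · intro i j
        cases i <;> cases j <;>
          simp [Matrix.fromBlocks_apply₁₁, Matrix.fromBlocks_apply₁₂,
            Matrix.fromBlocks_apply₂₁, Matrix.fromBlocks_apply₂₂,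
            Matrix.smul_apply, Matrix.one_apply, apply_ite Complex.im,
            hcim, hdim]
      · rw [hMtM, hc2, hd2, one_smul, one_smul, Matrix.fromBlocks_one]
      · rw [Matrix.det_fromBlocks_zero₂₁]
        simp only [Matrix.det_smul, Matrix.det_one, mul_one, Fintype.card_fin]
        have hcp : c ^ p * d ^ q = Complex.exp
            (Complex.I * ((t : ℂ) * a) * p + Complex.I * ((t : ℂ) * b) * q) := by
          rw [hc, hd, ← Complex.exp_nat_mul, ← Complex.exp_nat_mul, ← Complex.exp_add]
          ring_nf
        have h0r : t * a * p + t * b * q = 0 := by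
          rw [show t * a * p + t * b * q = t * (a * p + b * q) by ring, hab, mul_zero]
        have h0c : Complex.I * ((t : ℂ) * a) * p + Complex.I * ((t : ℂ) * b) * q = 0 := by
          have : ((t * a * p + t * b * q : ℝ) : ℂ) = 0 := by rw [h0r]; norm_num
          push_cast at this
          linear_combination Complex.I * this
        rw [hcp, h0c, Complex.exp_zero]
  refine ⟨fun t => ⟨hexp t, hiff t⟩, ?_⟩
  rintro n ⟨⟨hn0, hdp, hdq⟩, hnlb⟩
  constructor
  · refine ⟨by positivity, (hiff (n * π)).mpr ⟨?_, ?_⟩⟩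
    · set e := n * q / (p + q) with he
      have heq : e * (p + q) = n * q := Nat.div_mul_cancel hdq
      refine ⟨-(e : ℤ), ?_⟩
      have heR : (e : ℝ) * ((p : ℝ) + q) = (n : ℝ) * q := by exact_mod_cast heq
      rw [ha]
      push_cast
      field_simp
      nlinarith [heR, pi_pos]
    · set e := n * p / (p + q) with he
      have heq : e * (p + q) = n * p := Nat.div_mul_cancel hdp
      refine ⟨(e : ℤ), ?_⟩
      have heR : (e : ℝ) * ((p : ℝ) + q) = (n : ℝ) * p := by exact_mod_cast heq
      rw [hb]
      push_cast
      field_simp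
      nlinarith [heR, pi_pos]
  · rintro t ⟨ht0, htSO⟩
    obtain ⟨⟨k, hk⟩, ⟨l, hl⟩⟩ := (hiff t).mp htSO
    have hba : b - a = 1 := by rw [ha, hb]; field_simp; ring
    have htm : t = π * ((l : ℝ) - k) := by
      have h1 : t * b - t * a = t * (b - a) := by ring
      rw [hba, mul_one] at h1
      rw [← h1, hk, hl]; ring
    have hm0R : (0 : ℝ) < (l : ℝ) - k := by nlinarith [pi_pos, htm, ht0]
    have hm0 : 0 < l - k := by exact_mod_cast hm0R
    have h2q : ((l : ℝ) - k) * (-(q : ℝ)) = k * ((p : ℝ) + q) := by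
      have h1 : π * ((l : ℝ) - k) * (-(q : ℝ) / ((p : ℝ) + q)) = π * k := by
        rw [← htm, ← ha]; exact hk
      have hπ := pi_ne_zero
      field_simp at h1
      nlinarith [h1, pi_pos]
    have h2p : ((l : ℝ) - k) * (p : ℝ) = l * ((p : ℝ) + q) := by
      have h1 : π * ((l : ℝ) - k) * ((p : ℝ) / ((p : ℝ) + q)) = π * l := by
        rw [← htm, ← hb]; exact hl
      have hπ := pi_ne_zero
      field_simp at h1
      nlinarith [h1, pi_pos]
    have hZq : ((l : ℤ) - k) * (-(q : ℤ)) = k * ((p : ℤ) + q) := by exact_mod_cast h2q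
    have hZp : ((l : ℤ) - k) * (p : ℤ) = l * ((p : ℤ) + q) := by exact_mod_cast h2p
    have hdvq : ((p : ℤ) + q) ∣ ((l : ℤ) - k) * q := ⟨-k, by linear_combination -hZq⟩
    have hdvp : ((p : ℤ) + q) ∣ ((l : ℤ) - k) * p := ⟨l, by linear_combination hZp⟩
    set mm : ℕ := (l - k).toNat with hmm
    have hmmZ : (mm : ℤ) = l - k := Int.toNat_of_nonneg hm0.le
    have hmmR : (mm : ℝ) = (l : ℝ) - k := by exact_mod_cast hmmZ
    have hmem : mm ∈ {m : ℕ | 0 < m ∧ (p + q) ∣ m * p ∧ (p + q) ∣ m * q} := by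
      refine ⟨by omega, ?_, ?_⟩
      · have h : ((p + q : ℕ) : ℤ) ∣ ((mm * p : ℕ) : ℤ) := by
          push_cast
          rw [hmmZ]; exact hdvp
        exact_mod_cast h
      · have h : ((p + q : ℕ) : ℤ) ∣ ((mm * q : ℕ) : ℤ) := by
          push_cast
          rw [hmmZ]; exact hdvq
        exact_mod_cast h
    have hn_le : n ≤ mm := hnlb hmem
    have hnR : (n : ℝ) ≤ mm := by exact_mod_cast hn_le
    calc (n : ℝ) * π ≤ (mm : ℝ) * π := by nlinarith [pi_pos]
    _ = t := by rw [hmmR, htm]; ring
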